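/- arXiv:2201.07983 — 2 statements merged into one kernel-verified Lean document; each statement's English description precedes it below -/
import Mathlib

section
/- Let q ≥ 1 be a natural number and w a real number. Define u_n = ⌊n/q⌋ and v_n = n mod q, and define the lower-triangular infinite matrices D_{m,j} = δ_{v_{m-j},0} · m!·(u_{m-j}·q)! / ((m-j)!·u_{m-j}!) · w^{u_{m-j}} for j ≤ m (and 0 otherwise), and E_{n,i} = δ_{v_{n-i},0} · (-1)^{u_{n-i}} · w^{u_{n-i}} / ((v_n + q·u_i)! · u_{n-i}!) for i ≤ n (and 0 otherwise, with the convention w^0 = 1 even when w = 0). Then for all m, i: ∑_{j} D_{m,j}·E_{j,i} = δ_{m,i}. -/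
theorem stmt_1 (q : ℕ) (hq : 1 ≤ q) (w : ℝ)
    (u : ℕ → ℕ) (hu : ∀ n, u n = n / q)
    (v : ℕ → ℕ) (hv : ∀ n, v n = n % q)
    (D : ℕ → ℕ → ℝ)
    (hD : ∀ m j, D m j =
      if j ≤ m ∧ v (m - j) = 0 then
        ((m.factorial : ℝ) * (u (m - j) * q).factorial) /
          ((m - j).factorial * (u (m - j)).factorial) * w ^ (u (m - j))
      else 0)
    (E : ℕ → ℕ → ℝ)
    (hE : ∀ n i, E n i =
      if i ≤ n ∧ v (n - i) = 0 then
        (-1 : ℝ) ^ (u (n - i)) * w ^ (u (n - i)) /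
          (((v n + q * u i).factorial : ℝ) * (u (n - i)).factorial)
      else 0) :
    ∀ m i : ℕ, ∑ j ∈ Finset.range (m + 1), D m j * E j i =
      (if m = i then (1 : ℝ) else 0) := by
  intro m i
  by_cases h1 : i ≤ m ∧ q ∣ (m - i)
  · obtain ⟨him, c, hc⟩ := h1
    have hm : m = i + q * c := by omega
    -- restrict the sum to j = i + q*b
    have hsub : ((Finset.range (c+1)).image (fun b => i + q * b)) ⊆ Finset.range (m+1) := by
      intro j hj
      simp only [Finset.mem_image, Finset.mem_range] at hj ⊢
      obtain ⟨b, hb, rfl⟩ := hj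
      have : q * b ≤ q * c := Nat.mul_le_mul le_rfl (by omega)
      omega
    have hzero : ∀ j ∈ Finset.range (m+1),
        j ∉ (Finset.range (c+1)).image (fun b => i + q * b) → D m j * E j i = 0 := by
      intro j hj hjn
      rw [hD, hE]
      by_cases hDj : j ≤ m ∧ v (m - j) = 0
      · by_cases hEj : i ≤ j ∧ v (j - i) = 0
        · exfalso
          apply hjn
          simp only [Finset.mem_image, Finset.mem_range]
          have h2 : q ∣ (m - j) := by
            have := hDj.2; rw [hv] at this; exact Nat.dvd_of_mod_eq_zero this
          have h3 : q ∣ (j - i) := by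
            have := hEj.2; rw [hv] at this; exact Nat.dvd_of_mod_eq_zero this
          obtain ⟨b, hb⟩ := h3
          have hij := hEj.1; have hjm := hDj.1
          have hle : q * b ≤ q * c := by omega
          have hbc2 : b ≤ c := Nat.le_of_mul_le_mul_left hle (by omega)
          exact ⟨b, by omega, by omega⟩
        · rw [if_neg hEj, mul_zero]
      · rw [if_neg hDj, zero_mul]
    rw [← Finset.sum_subset hsub hzero,
      Finset.sum_image (by
        intro a _ b _ h
        have hab : q * a = q * b := by dsimp only at h; omega
        exact Nat.eq_of_mul_eq_mul_left (by omega) hab)]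
    have key : ∀ b ∈ Finset.range (c+1),
        D m (i + q * b) * E (i + q * b) i =
        ((m.factorial : ℝ) * w ^ c / (i.factorial * c.factorial)) *
          ((-1 : ℝ) ^ b * (c.choose b)) := by
      intro b hb
      rw [Finset.mem_range] at hb
      have hbc : b ≤ c := by omega
      have hdist : q * (c - b) + q * b = q * c := by
        rw [← Nat.mul_add]; congr 1; omega
      have h1 : m - (i + q * b) = q * (c - b) := by omega
      have h2 : (i + q * b) - i = q * b := by omega
      rw [hD, hE, if_pos, if_pos]
      · rw [h1, h2]
        simp only [hu, hv]
        have e1 : q * (c - b) / q = c - b := Nat.mul_div_cancel_left _ (by omega)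
        have e2 : q * b / q = b := Nat.mul_div_cancel_left _ (by omega)
        have e3 : (i + q * b) % q = i % q := Nat.add_mul_mod_self_left i q b
        have e4 : i % q + q * (i / q) = i := Nat.mod_add_div i q
        rw [e1, e2, e3, e4]
        have hfac : (c.choose b : ℝ) * b.factorial * (c - b).factorial = c.factorial := by
          exact_mod_cast congrArg (fun n : ℕ => (n : ℝ))
            (Nat.choose_mul_factorial_mul_factorial hbc)
        have hw : w ^ (c - b) * w ^ b = w ^ c := by
          rw [← pow_add]; congr 1; omega
        have f1 : ((c - b).factorial : ℝ) ≠ 0 := Nat.cast_ne_zero.mpr (Nat.factorial_ne_zero _)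
        have f2 : (b.factorial : ℝ) ≠ 0 := Nat.cast_ne_zero.mpr (Nat.factorial_ne_zero _)
        have f3 : (i.factorial : ℝ) ≠ 0 := Nat.cast_ne_zero.mpr (Nat.factorial_ne_zero _)
        have f4 : (c.factorial : ℝ) ≠ 0 := Nat.cast_ne_zero.mpr (Nat.factorial_ne_zero _)
        have f5 : ((q * (c - b)).factorial : ℝ) ≠ 0 := Nat.cast_ne_zero.mpr (Nat.factorial_ne_zero _)
        field_simp
        rw [← hw, ← hfac]
        ring
      · have : q * b ≤ q * c := Nat.mul_le_mul le_rfl hbc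
        refine ⟨by omega, ?_⟩
        rw [h2, hv]; exact Nat.mul_mod_right q b
      · refine ⟨by omega, ?_⟩
        rw [h1, hv]; exact Nat.mul_mod_right q (c - b)
    rw [Finset.sum_congr rfl key, ← Finset.mul_sum]
    have halt : ∑ b ∈ Finset.range (c+1), (-1 : ℝ) ^ b * (c.choose b) =
        if c = 0 then 1 else 0 := by
      have := Int.alternating_sum_range_choose (n := c)
      have h := congrArg (fun z : ℤ => (z : ℝ)) this
      push_cast at h
      rw [h]
    rw [halt]
    by_cases hc0 : c = 0
    · subst hc0
      have : m = i := by omega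
      subst this
      rw [if_pos rfl, if_pos rfl]
      have f3 : (m.factorial : ℝ) ≠ 0 := Nat.cast_ne_zero.mpr (Nat.factorial_ne_zero _)
      field_simp
      simp
    · have hpos : 0 < q * c := Nat.mul_pos (by omega) (by omega)
      have : m ≠ i := by omega
      rw [if_neg hc0, if_neg this, mul_zero]
  · have hmi : m ≠ i := by
      rintro rfl; exact h1 ⟨le_refl _, by simp⟩
    rw [if_neg hmi]
    apply Finset.sum_eq_zero
    intro j hj
    rw [hD, hE]
    by_cases hDj : j ≤ m ∧ v (m - j) = 0
    · by_cases hEj : i ≤ j ∧ v (j - i) = 0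
      · exfalso
        apply h1
        have h2 : q ∣ (m - j) := by
          have := hDj.2; rw [hv] at this; exact Nat.dvd_of_mod_eq_zero this
        have h3 : q ∣ (j - i) := by
          have := hEj.2; rw [hv] at this; exact Nat.dvd_of_mod_eq_zero this
        refine ⟨hEj.1.trans hDj.1, ?_⟩
        have heq : m - i = (m - j) + (j - i) := by
          have := hEj.1; have := hDj.1; omega
        rw [heq]; exact dvd_add h2 h3
      · rw [if_neg hEj, mul_zero]
    · rw [if_neg hDj, zero_mul]
end

section
/- For all natural numbers n ≥ k ≥ 1, the partial Bell polynomial satisfies B_{n,k}(1, 2, 3, …, n−k+1) = C(n,k) · k^{n−k}. -/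
/-- Partial (incomplete) exponential Bell polynomial `B_{n,k}` evaluated at the
sequence `x` (where `x m` is the `m`-th argument `x_m`), via the standard recurrence
`B_{n+1,k+1} = ∑_{i=0}^{n} C(n,i) x_{i+1} B_{n-i,k}`. -/
noncomputable def bellPoly (x : ℕ → ℝ) : ℕ → ℕ → ℝ
  | 0, 0 => 1
  | _ + 1, 0 => 0
  | 0, _ + 1 => 0
  | n + 1, k + 1 =>
      ∑ i ∈ Finset.range (n + 1), (n.choose i : ℝ) * x (i + 1) * bellPoly x (n - i) k
  termination_by n k => k

lemma bellPoly_eq_zero (x : ℕ → ℝ) : ∀ k n, n < k → bellPoly x n k = 0 := by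
  intro k
  induction k with
  | zero => intro n h; omega
  | succ k ih =>
    intro n h
    match n with
    | 0 => simp [bellPoly]
    | n + 1 =>
      rw [bellPoly]
      apply Finset.sum_eq_zero
      intro i hi
      rw [ih _ (by omega), mul_zero]

lemma sumA (m : ℕ) (r : ℝ) :
    ∑ i ∈ Finset.range (m + 1), (m.choose i : ℝ) * r ^ (m - i) = (r + 1) ^ m := by
  have h := add_pow 1 r m
  simp only [one_pow, one_mul] at h
  rw [add_comm r 1, h]
  exact Finset.sum_congr rfl fun i _ => by ring

lemma sumB (m : ℕ) (r : ℝ) :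
    ∑ i ∈ Finset.range (m + 1), (i : ℝ) * (m.choose i : ℝ) * r ^ (m - i)
      = (m : ℝ) * (r + 1) ^ (m - 1) := by
  match m with
  | 0 => simp
  | m + 1 =>
    rw [Finset.sum_range_succ']
    have key : ∀ j : ℕ, ((j + 1 : ℕ) : ℝ) * ((m + 1).choose (j + 1) : ℝ)
        = ((m + 1 : ℕ) : ℝ) * (m.choose j : ℝ) := by
      intro j
      have h := Nat.add_one_mul_choose_eq m j
      have h2 : ((j + 1) * (m + 1).choose (j + 1) : ℕ) = ((m + 1) * m.choose j : ℕ) :=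
        (Nat.mul_comm _ _).trans h.symm
      exact_mod_cast congrArg (Nat.cast (R := ℝ)) h2
    simp only [Nat.cast_zero, zero_mul, add_zero]
    calc ∑ j ∈ Finset.range (m + 1),
            ((j + 1 : ℕ) : ℝ) * ((m + 1).choose (j + 1) : ℝ) * r ^ (m + 1 - (j + 1))
        = ∑ j ∈ Finset.range (m + 1), ((m + 1 : ℕ) : ℝ) * ((m.choose j : ℝ) * r ^ (m - j)) := by
          refine Finset.sum_congr rfl fun j hj => ?_
          rw [key j]
          have : m + 1 - (j + 1) = m - j := by omega
          rw [this]; ring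
      _ = (m + 1 : ℝ) * (r + 1) ^ m := by
          rw [← Finset.mul_sum, sumA]; push_cast; ring
      _ = ((m + 1 : ℕ) : ℝ) * (r + 1) ^ (m + 1 - 1) := by push_cast; ring

theorem stmt_12 (n k : ℕ) (hk : 1 ≤ k) (hkn : k ≤ n) :
    bellPoly (fun m => (m : ℝ)) n k =
      (n.choose k : ℝ) * (k : ℝ) ^ (n - k) := by
  induction k generalizing n with
  | zero => omega
  | succ k ih =>
    match n, hkn with
    | n + 1, hkn =>
    rw [bellPoly]
    rcases Nat.eq_zero_or_pos k with hk0 | hkpos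
    · subst hk0
      -- B_{n+1,1} = n+1
      rw [Finset.sum_eq_single n]
      · simp [bellPoly, Nat.sub_self]
      · intro i hi hine
        simp only [Finset.mem_range] at hi
        have hni : n - i ≠ 0 := by omega
        obtain ⟨m, hm⟩ := Nat.exists_eq_succ_of_ne_zero hni
        rw [hm]
        simp [bellPoly]
      · intro h; simp at h
    · have hkn' : k ≤ n := by omega
      obtain ⟨m, rfl⟩ := Nat.exists_eq_add_of_le hkn'
      -- split sum: terms with i > m vanish
      have hsplit : ∀ i ∈ Finset.range (k + m + 1), i ∉ Finset.range (m + 1) →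
          ((k + m).choose i : ℝ) * ((i + 1 : ℕ) : ℝ)
            * bellPoly (fun m => (m : ℝ)) (k + m - i) k = 0 := by
        intro i hi hni
        simp only [Finset.mem_range] at hi hni
        rw [bellPoly_eq_zero _ k (k + m - i) (by omega), mul_zero]
      have hsub : Finset.range (m + 1) ⊆ Finset.range (k + m + 1) :=
        Finset.range_subset_range.mpr (by omega)
      rw [← Finset.sum_subset hsub hsplit]
      have step : ∀ i ∈ Finset.range (m + 1),
          ((k + m).choose i : ℝ) * ((i + 1 : ℕ) : ℝ)
              * bellPoly (fun m => (m : ℝ)) (k + m - i) k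
            = ((k + m).choose k : ℝ)
              * ((m.choose i : ℝ) * ((i : ℝ) + 1) * (k : ℝ) ^ (m - i)) := by
        intro i hi
        simp only [Finset.mem_range] at hi
        rw [ih (k + m - i) hkpos (by omega)]
        have hcast : ((k + m).choose i : ℝ) * ((k + m - i).choose k : ℝ)
            = ((k + m).choose k : ℝ) * (m.choose i : ℝ) := by
          have h := Nat.choose_mul (n := k + m)
            (show k ≤ k + m - i by omega)
          rw [Nat.choose_symm (show i ≤ k + m by omega)] at h
          rw [show k + m - k = m by omega, show k + m - i - k = m - i by omega] at h
          rw [Nat.choose_symm (show i ≤ m by omega)] at h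
          exact_mod_cast h
        rw [show k + m - i - k = m - i by omega]
        push_cast
        linear_combination ((i : ℝ) + 1) * (k : ℝ) ^ (m - i) * hcast
      rw [Finset.sum_congr rfl step, ← Finset.mul_sum]
      have hsum : ∑ i ∈ Finset.range (m + 1),
          (m.choose i : ℝ) * ((i : ℝ) + 1) * (k : ℝ) ^ (m - i)
            = ((k : ℝ) + 1) ^ m + (m : ℝ) * ((k : ℝ) + 1) ^ (m - 1) := by
        rw [← sumA m (k : ℝ), ← sumB m (k : ℝ), ← Finset.sum_add_distrib]
        exact Finset.sum_congr rfl fun i _ => by ring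
      rw [hsum]
      rw [show k + m + 1 - (k + 1) = m by omega]
      match m with
      | 0 =>
        simp [Nat.choose_self]
      | m + 1 =>
        have hc := Nat.add_one_mul_choose_eq (k + (m + 1)) k
        have hc' : ((k + (m + 1) + 1) * (k + (m + 1)).choose k : ℕ)
            = ((k + (m + 1) + 1).choose (k + 1) * (k + 1) : ℕ) := hc
        have hcr : ((k + (m + 1) + 1 : ℕ) : ℝ) * ((k + (m + 1)).choose k : ℝ)
            = ((k + (m + 1) + 1).choose (k + 1) : ℝ) * ((k + 1 : ℕ) : ℝ) := by
          exact_mod_cast congrArg (Nat.cast (R := ℝ)) hc'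
        push_cast at hcr ⊢
        linear_combination ((k : ℝ) + 1) ^ m * hcr
end
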